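/- arXiv:1806.00653 — 6 statements merged into one kernel-verified Lean document; each statement's English description precedes it below -/
import Mathlib

section
/- Let S be an n×n real symmetric matrix with non-negative diagonal entries, non-positive off-diagonal entries, and all row sums non-negative. Then S is a non-negative linear combination of positive semidefinite matrices each of which is supported on a 2×2 principal submatrix, plus a non-negative diagonal matrix. -/
/-!
The rank-one matrix `(e_p - e_q)(e_p - e_q)ᵀ` is positive semidefinite and supported on `{p, q}`.
For symmetric `S`, summing these over `p ≠ q` with the weights `-S p q / 2` (non-negative because
the off-diagonal entries are) gives `S - diagonal (row sums of S)`: this is the identity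
`∑ w p q (e_p - e_q)(e_p - e_q)ᵀ = 2 (diagonal (row sums of w) - w)` for the graph Laplacian of a
symmetric weight matrix `w`. The remaining diagonal matrix of row sums is non-negative.
-/

open Finset

namespace Matrix

variable {ι R : Type*} [DecidableEq ι]

def edgeMatrix [Ring R] (p q : ι) : Matrix ι ι R :=
  vecMulVec (Pi.single p 1 - Pi.single q 1) (Pi.single p 1 - Pi.single q 1)

theorem edgeMatrix_apply [Ring R] (p q a b : ι) :
    (edgeMatrix p q : Matrix ι ι R) a b =
      (Pi.single p 1 - Pi.single q 1 : ι → R) a * (Pi.single p 1 - Pi.single q 1 : ι → R) b := rfl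

@[simp]
theorem edgeMatrix_self [Ring R] (p : ι) : (edgeMatrix p p : Matrix ι ι R) = 0 := by
  simp [edgeMatrix]

theorem posSemidef_edgeMatrix [Fintype ι] [CommRing R] [PartialOrder R] [StarRing R]
    [TrivialStar R] [StarOrderedRing R] (p q : ι) : (edgeMatrix p q : Matrix ι ι R).PosSemidef := by
  simpa [edgeMatrix, star_trivial] using
    posSemidef_vecMulVec_self_star (Pi.single p 1 - Pi.single q 1 : ι → R)

theorem mem_of_edgeMatrix_apply_ne_zero [Ring R] {p q a b : ι}
    (h : (edgeMatrix p q : Matrix ι ι R) a b ≠ 0) : (a = p ∨ a = q) ∧ (b = p ∨ b = q) := by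
  rw [edgeMatrix_apply] at h
  constructor <;> by_contra! hne <;> simp [Pi.single_apply, hne] at h

theorem sum_smul_edgeMatrix [Fintype ι] [CommRing R] {w : Matrix ι ι R} (hw : w.IsSymm) :
    ∑ p, ∑ q, w p q • edgeMatrix p q = 2 • (diagonal (fun a => ∑ q, w a q) - w) := by
  ext a b
  simp only [sum_apply, smul_apply, edgeMatrix_apply, Pi.sub_apply, smul_eq_mul]
  simp only [Pi.single_apply, mul_sub, mul_ite, mul_one, mul_zero, sum_sub_distrib, sum_ite_eq,
    sum_ite_irrel, sum_const_zero, mem_univ, if_true, hw.apply, sub_apply, diagonal_apply]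
  split_ifs with hab
  · subst hab; ring
  · ring

/-- The weight at `p = q` is irrelevant since `edgeMatrix p p = 0`; it is set to `0` so that all
weights are non-negative for the matrices of the main theorem. -/
theorem eq_sum_smul_edgeMatrix_add_diagonal {K : Type*} [Fintype ι] [Field K] [NeZero (2 : K)]
    {S : Matrix ι ι K} (hS : S.IsSymm) :
    S = ∑ p, ∑ q, (if p = q then 0 else -S p q / 2) • edgeMatrix p q +
      diagonal (fun i => ∑ j, S i j) := by
  have hcoeff : ∑ p, ∑ q, (if p = q then 0 else -S p q / 2) • (edgeMatrix p q : Matrix ι ι K) =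
      ∑ p, ∑ q, ((-2⁻¹ : K) • S) p q • edgeMatrix p q := by
    refine sum_congr rfl fun p _ => sum_congr rfl fun q _ => ?_
    split_ifs with h
    · simp [h]
    · simp [div_eq_inv_mul]
  rw [hcoeff, sum_smul_edgeMatrix (hS.smul _)]
  ext a b
  simp only [add_apply, smul_apply, sub_apply, diagonal_apply, smul_eq_mul]
  simp only [nsmul_eq_mul]
  split_ifs with hab
  · subst hab
    rw [← mul_sum]
    field_simp
    ring
  · field_simp
    ring

end Matrix

open Matrix

theorem stmt2_general (n : ℕ) (S : Matrix (Fin n) (Fin n) ℝ)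
    (hsymm : S.IsSymm)
    (hoff : ∀ i j, i ≠ j → S i j ≤ 0)
    (hrow : ∀ i, 0 ≤ ∑ j, S i j) :
    ∃ (N : ℕ) (c : Fin N → ℝ) (M : Fin N → Matrix (Fin n) (Fin n) ℝ)
      (D : Matrix (Fin n) (Fin n) ℝ),
      (∀ t, 0 ≤ c t) ∧
      (∀ t, (M t).PosSemidef) ∧
      (∀ t, ∃ p q : Fin n, ∀ a b, M t a b ≠ 0 → (a = p ∨ a = q) ∧ (b = p ∨ b = q)) ∧
      D.IsDiag ∧ (∀ i, 0 ≤ D i i) ∧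
      S = (∑ t, c t • M t) + D := by
  let e : Fin (n * n) ≃ Fin n × Fin n := finProdFinEquiv.symm
  let c : Fin n → Fin n → ℝ := fun p q => if p = q then 0 else -S p q / 2
  have hc : ∀ p q, 0 ≤ c p q := fun p q => by
    unfold c
    split_ifs with h
    exacts [le_rfl, by linarith [hoff p q h]]
  refine ⟨n * n, fun t => c (e t).1 (e t).2, fun t => edgeMatrix (e t).1 (e t).2,
    diagonal (fun i => ∑ j, S i j), fun t => hc _ _, fun t => posSemidef_edgeMatrix _ _,
    fun t => ⟨_, _, fun a b => mem_of_edgeMatrix_apply_ne_zero⟩, isDiag_diagonal _,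
    fun i => by simpa using hrow i, ?_⟩
  rw [Equiv.sum_comp e (fun pq => c pq.1 pq.2 • edgeMatrix pq.1 pq.2), Fintype.sum_prod_type]
  exact eq_sum_smul_edgeMatrix_add_diagonal hsymm

/-- A real symmetric matrix with non-negative diagonal entries, non-positive
off-diagonal entries, and non-negative row sums is a non-negative combination of
PSD matrices each supported on a 2×2 principal submatrix, plus a non-negative
diagonal matrix. -/
theorem stmt2 (n : ℕ) (S : Matrix (Fin n) (Fin n) ℝ)
    (hsymm : S.IsSymm)
    (hdiag : ∀ i, 0 ≤ S i i)
    (hoff : ∀ i j, i ≠ j → S i j ≤ 0)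
    (hrow : ∀ i, 0 ≤ ∑ j, S i j) :
    ∃ (N : ℕ) (c : Fin N → ℝ) (M : Fin N → Matrix (Fin n) (Fin n) ℝ)
      (D : Matrix (Fin n) (Fin n) ℝ),
      (∀ t, 0 ≤ c t) ∧
      (∀ t, (M t).PosSemidef) ∧
      (∀ t, ∃ p q : Fin n, ∀ a b, M t a b ≠ 0 → (a = p ∨ a = q) ∧ (b = p ∨ b = q)) ∧
      D.IsDiag ∧ (∀ i, 0 ≤ D i i) ∧
      S = (∑ t, c t • M t) + D :=
  stmt2_general n S hsymm hoff hrow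
end

section
/- For any vector x ∈ ℂⁿ and any 1 ≤ k ≤ n, the maximum of |⟨x, v⟩| over unit vectors v ∈ ℂⁿ with at most k non-zero entries equals the square root of the sum of the k largest values among |x_1|², …, |x_n|². -/
/-!
Restricting the sum to the support `F` of a unit vector `v`, Cauchy–Schwarz gives
`|⟨x, v⟩| ≤ √(∑_{i ∈ F} |x_i|²)`, and `F` extends to a `k`-set whose sum is at most the maximal
one. Conversely, on a `k`-set `T` attaining the maximum, `v = x|_T / ‖x|_T‖` attains the bound
(any unit vector supported in `T` does when `x|_T = 0`).
-/

open Finset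

section SubsetSums

variable {ι : Type*} [Fintype ι] (f : ι → ℝ) (k : ℕ)

def subsetSumsOfCard : Set ℝ := {t | ∃ T : Finset ι, T.card = k ∧ t = ∑ i ∈ T, f i}

variable {f k}

theorem subsetSumsOfCard_finite : (subsetSumsOfCard f k).Finite :=
  (Set.finite_range fun T : Finset ι => ∑ i ∈ T, f i).subset fun _ ⟨T, _, hT⟩ => ⟨T, hT.symm⟩

theorem exists_card_eq_sum_eq_sSup_subsetSumsOfCard (hk : k ≤ Fintype.card ι) :
    ∃ T : Finset ι, T.card = k ∧ ∑ i ∈ T, f i = sSup (subsetSumsOfCard f k) := by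
  obtain ⟨T, -, hT⟩ := exists_subset_card_eq (s := (univ : Finset ι)) (n := k) (by simpa using hk)
  have hne : (subsetSumsOfCard f k).Nonempty := ⟨_, T, hT, rfl⟩
  obtain ⟨S, hS, hsum⟩ := hne.csSup_mem subsetSumsOfCard_finite
  exact ⟨S, hS, hsum.symm⟩

theorem sum_le_sSup_subsetSumsOfCard (hf : 0 ≤ f) (hk : k ≤ Fintype.card ι) {S : Finset ι}
    (hS : S.card ≤ k) : ∑ i ∈ S, f i ≤ sSup (subsetSumsOfCard f k) := by
  obtain ⟨T, hST, hT⟩ := exists_superset_card_eq hS (by simpa using hk)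
  calc ∑ i ∈ S, f i ≤ ∑ i ∈ T, f i := sum_le_sum_of_subset_of_nonneg hST fun i _ _ => hf i
    _ ≤ _ := le_csSup subsetSumsOfCard_finite.bddAbove ⟨T, hT, rfl⟩

end SubsetSums

section InnerSums

open ComplexConjugate

variable {𝕜 ι : Type*} [RCLike 𝕜] [Fintype ι]

theorem norm_sum_conj_mul_le (x v : ι → 𝕜) {F : Finset ι} (hv : ∀ i ∉ F, v i = 0) :
    ‖∑ i, conj (x i) * v i‖ ≤ √(∑ i ∈ F, ‖x i‖ ^ 2) * √(∑ i, ‖v i‖ ^ 2) := by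
  have hxv : ∑ i ∈ F, conj (x i) * v i = ∑ i, conj (x i) * v i :=
    sum_subset (subset_univ F) fun i _ hi => by simp [hv i hi]
  have hvv : ∑ i ∈ F, ‖v i‖ ^ 2 = ∑ i, ‖v i‖ ^ 2 :=
    sum_subset (subset_univ F) fun i _ hi => by simp [hv i hi]
  calc ‖∑ i, conj (x i) * v i‖ = ‖∑ i ∈ F, conj (x i) * v i‖ := by rw [hxv]
    _ ≤ ∑ i ∈ F, ‖x i‖ * ‖v i‖ := by
        simpa only [norm_mul, RCLike.norm_conj] using norm_sum_le F fun i => conj (x i) * v i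
    _ ≤ √(∑ i ∈ F, ‖x i‖ ^ 2) * √(∑ i, ‖v i‖ ^ 2) := by
        rw [← hvv]; exact Real.sum_mul_le_sqrt_mul_sqrt _ _ _

theorem exists_sum_norm_sq_eq_one_norm_sum_conj_mul_eq (x : ι → 𝕜) {T : Finset ι}
    (hT : T.Nonempty) : ∃ v : ι → 𝕜, ∑ i, ‖v i‖ ^ 2 = 1 ∧ (∀ i ∉ T, v i = 0) ∧
      ‖∑ i, conj (x i) * v i‖ = √(∑ i ∈ T, ‖x i‖ ^ 2) := by
  classical
  set m := ∑ i ∈ T, ‖x i‖ ^ 2 with hm_def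
  by_cases hm : m = 0
  · obtain ⟨i₀, hi₀⟩ := hT
    have hx : x i₀ = 0 := by
      simpa using (sum_eq_zero_iff_of_nonneg fun i _ => sq_nonneg ‖x i‖).1 hm i₀ hi₀
    refine ⟨Pi.single i₀ 1, ?_, fun i hi => ?_, ?_⟩
    · simp [Pi.single_apply, apply_ite]
    · exact Pi.single_eq_of_ne (ne_of_mem_of_not_mem hi₀ hi).symm _
    · simp [Pi.single_apply, hm, hx]
  have hm0 : 0 ≤ m := by positivity
  refine ⟨fun i => if i ∈ T then x i / (√m : 𝕜) else 0, ?_, fun i hi => if_neg hi, ?_⟩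
  · calc ∑ i, ‖if i ∈ T then x i / (√m : 𝕜) else 0‖ ^ 2
          = ∑ i, if i ∈ T then ‖x i‖ ^ 2 / m else 0 := by
            refine sum_congr rfl fun i _ => ?_
            split_ifs <;> simp [norm_div, div_pow, Real.sq_sqrt hm0]
      _ = 1 := by rw [sum_ite_mem, univ_inter, ← sum_div, div_self hm]
  · have hsum :
        ∑ i, conj (x i) * (if i ∈ T then x i / (√m : 𝕜) else 0) = (m : 𝕜) / (√m : 𝕜) := by
      simp only [mul_ite, mul_zero, sum_ite_mem, univ_inter, mul_div_assoc', ← sum_div,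
        RCLike.conj_mul, hm_def]
      push_cast; rfl
    rw [hsum, norm_div, RCLike.norm_ofReal, RCLike.norm_ofReal, abs_of_nonneg hm0,
      abs_of_nonneg (Real.sqrt_nonneg m), Real.div_sqrt]

end InnerSums

open scoped Classical

/-- The maximum of |⟨x, v⟩| over k-incoherent unit vectors v equals the square
root of the sum of the k largest values among |x_i|². -/
theorem stmt3 (n k : ℕ) (hk : 1 ≤ k) (hkn : k ≤ n) (x : Fin n → ℂ) :
    IsGreatest {r : ℝ | ∃ v : Fin n → ℂ,
        (∑ i, ‖v i‖ ^ 2 = 1) ∧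
        (Finset.univ.filter fun i => v i ≠ 0).card ≤ k ∧
        r = ‖∑ i, (starRingEnd ℂ) (x i) * v i‖}
      (Real.sqrt (sSup {t : ℝ | ∃ T : Finset (Fin n), T.card = k ∧
          t = ∑ i ∈ T, ‖x i‖ ^ 2})) := by
  obtain ⟨T, hTcard, hTmax⟩ :=
    exists_card_eq_sum_eq_sSup_subsetSumsOfCard (f := fun i => ‖x i‖ ^ 2) (by simpa using hkn)
  constructor
  · obtain ⟨v, hv1, hvT, hxv⟩ :=
      exists_sum_norm_sq_eq_one_norm_sum_conj_mul_eq x (card_pos.mp (by omega : 0 < T.card))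
    have hsupp : (univ.filter fun i => v i ≠ 0) ⊆ T := fun i hi => by
      by_contra hiT
      exact (mem_filter.mp hi).2 (hvT i hiT)
    exact ⟨v, hv1, (card_le_card hsupp).trans hTcard.le, by rw [hxv, hTmax]; rfl⟩
  · rintro r ⟨v, hv1, hvk, rfl⟩
    calc ‖∑ i, (starRingEnd ℂ) (x i) * v i‖
        ≤ √(∑ i ∈ univ.filter fun i => v i ≠ 0, ‖x i‖ ^ 2) * √(∑ i, ‖v i‖ ^ 2) :=
          norm_sum_conj_mul_le x v fun i hi => by simpa using hi
      _ ≤ _ := by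
          rw [hv1, Real.sqrt_one, mul_one]
          exact Real.sqrt_le_sqrt <| sum_le_sSup_subsetSumsOfCard (fun i => by positivity)
            (by simpa using hkn) hvk
end

section
/- Let v = (v_1,…,v_n) be a unit vector in ℝⁿ with v_1 ≥ v_2 ≥ ⋯ ≥ v_n ≥ 0, fix 2 ≤ k ≤ n, let 2 ≤ ℓ ≤ k be the largest integer with v_{ℓ-1} ≥ s_ℓ/(k-ℓ+1) where s_j = ∑_{i=j}^n v_i, set α = s_ℓ/(k-ℓ+1) and β = √(α s_ℓ + ∑_{j=1}^{ℓ-1} v_j²), and define a = (1/β)(v_1,…,v_{ℓ-1},α,…,α) ∈ ℝⁿ and W = a aᵀ. Then the trace of every k×k principal submatrix of W is at most 1. -/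
/-! Up to the factor `1 / β`, `a` is the sequence `b = (v₁, …, v_{ℓ-1}, α, …, α)`, which is
nonnegative and nonincreasing on `[1, n]` because `α ≤ v_{ℓ-1}`. So among all `k`-element sums of
the `b i ^ 2` the first `k` terms give the largest, and that sum is
`∑_{j<ℓ} v_j² + (k - ℓ + 1) α² = ∑_{j<ℓ} v_j² + α s_ℓ = β²`. -/

open Finset

namespace Finset

theorem sum_le_sum_of_card_eq_of_forall_sdiff_le {ι M : Type*} [DecidableEq ι] [AddCommMonoid M]
    [LinearOrder M] [IsOrderedAddMonoid M] {s t : Finset ι} {f : ι → M} (hst : #s = #t)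
    (hf : ∀ x ∈ s \ t, ∀ y ∈ t \ s, f x ≤ f y) :
    ∑ x ∈ s, f x ≤ ∑ x ∈ t, f x := by
  rw [← sum_inter_add_sum_sdiff s t, ← sum_inter_add_sum_sdiff t s, inter_comm]
  gcongr ?_ + ?_
  · exact le_rfl
  rcases (s \ t).eq_empty_or_nonempty with hempty | hne
  · have : t \ s = ∅ := card_eq_zero.1 (by rw [← card_sdiff_comm hst, hempty, card_empty])
    simp [hempty, this]
  calc ∑ x ∈ s \ t, f x ≤ #(s \ t) • (s \ t).sup' hne f :=
        sum_le_card_nsmul _ _ _ fun x hx => le_sup' f hx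
    _ = #(t \ s) • (s \ t).sup' hne f := by rw [card_sdiff_comm hst]
    _ ≤ ∑ y ∈ t \ s, f y :=
        card_nsmul_le_sum _ _ _ fun y hy => sup'_le hne f fun x hx => hf x hx y hy

theorem sum_le_sum_Icc_card_of_antitoneOn {M : Type*} [AddCommMonoid M] [LinearOrder M]
    [IsOrderedAddMonoid M] {n : ℕ} {f : ℕ → M} (hf : AntitoneOn f (Set.Icc 1 n)) {T : Finset ℕ}
    (hT : T ⊆ Icc 1 n) : ∑ i ∈ T, f i ≤ ∑ i ∈ Icc 1 #T, f i := by
  have hTn : #T ≤ n := by simpa using card_le_card hT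
  refine sum_le_sum_of_card_eq_of_forall_sdiff_le (by simp) fun x hx y hy => ?_
  have hxn := hT (mem_sdiff.1 hx).1
  simp only [mem_sdiff, mem_Icc] at hx hy hxn
  exact hf ⟨hy.1.1, by omega⟩ hxn (by omega)

theorem sum_Icc_ite_le {M : Type*} [AddCommMonoid M] (f : ℕ → M) (c : M) {m k : ℕ}
    (hmk : m ≤ k) :
    ∑ i ∈ Icc 1 k, (if i ≤ m then f i else c) = ∑ i ∈ Icc 1 m, f i + (k - m) • c := by
  rw [sum_ite, sum_const]
  congr 3
  · ext i; simp only [mem_filter, mem_Icc]; omega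
  · rw [← Nat.card_Ioc]; congr 1; ext i; simp only [mem_filter, mem_Icc, mem_Ioc]; omega

end Finset

theorem AntitoneOn.ite_le {ι β : Type*} [LinearOrder ι] [Preorder β] {s : Set ι} [s.OrdConnected]
    {v : ι → β} (hv : AntitoneOn v s) {m : ι} {c : β} (hc : c ≤ v m) :
    AntitoneOn (fun i => if i ≤ m then v i else c) s := by
  intro i hi j hj hij
  dsimp only
  split_ifs with hjm him him
  · exact hv hi hj hij
  · exact absurd (hij.trans hjm) him
  · exact hc.trans (hv hi (Set.OrdConnected.out ‹_› hi hj ⟨him, (not_le.1 hjm).le⟩) him)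
  · exact le_rfl

theorem stmt4_general (n k ℓ : ℕ) (v s : ℕ → ℝ) (α β : ℝ) (a : ℕ → ℝ)
    (hnn : ∀ i ∈ Finset.Icc 1 n, 0 ≤ v i)
    (hmono : ∀ i ∈ Finset.Icc 1 n, ∀ j ∈ Finset.Icc 1 n, i ≤ j → v j ≤ v i)
    (hs : ∀ j, s j = ∑ i ∈ Finset.Icc j n, v i)
    (hℓ2 : 2 ≤ ℓ) (hℓk : ℓ ≤ k)
    (hℓ : s ℓ / ((k - ℓ + 1 : ℕ) : ℝ) ≤ v (ℓ - 1))
    (hα : α = s ℓ / ((k - ℓ + 1 : ℕ) : ℝ))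
    (hβ : β = Real.sqrt (α * s ℓ + ∑ j ∈ Finset.Icc 1 (ℓ - 1), v j ^ 2))
    (ha : ∀ i, a i = if i ≤ ℓ - 1 then v i / β else α / β) :
    ∀ T ⊆ Finset.Icc 1 n, T.card = k → ∑ i ∈ T, a i * a i ≤ 1 := by
  intro T hT hTk
  set b : ℕ → ℝ := fun i => if i ≤ ℓ - 1 then v i else α with hb
  have hsℓ0 : 0 ≤ s ℓ :=
    hs ℓ ▸ sum_nonneg fun i hi => hnn i (by simp only [mem_Icc] at hi ⊢; omega)
  have hα0 : 0 ≤ α := hα ▸ div_nonneg hsℓ0 (Nat.cast_nonneg _)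
  have hb0 : ∀ i ∈ Set.Icc 1 n, 0 ≤ b i := fun i hi => by
    simp only [hb]; split_ifs
    exacts [hnn i (mem_Icc.2 hi), hα0]
  have hv : AntitoneOn v (Set.Icc 1 n) := fun i hi j hj =>
    hmono i (mem_Icc.2 hi) j (mem_Icc.2 hj)
  have hb_anti : AntitoneOn (fun i => b i ^ 2) (Set.Icc 1 n) := fun i hi j hj hij =>
    pow_le_pow_left₀ (hb0 j hj) (hv.ite_le (hα ▸ hℓ) hi hj hij) 2
  have hβsq : β ^ 2 = ∑ i ∈ Icc 1 k, b i ^ 2 := by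
    have hkℓ : ((k - ℓ + 1 : ℕ) : ℝ) ≠ 0 := by positivity
    have hsℓ : s ℓ = (k - ℓ + 1 : ℕ) * α := by rw [hα]; field_simp
    have hβ0 : 0 ≤ α * s ℓ + ∑ j ∈ Icc 1 (ℓ - 1), v j ^ 2 :=
      add_nonneg (mul_nonneg hα0 hsℓ0) (sum_nonneg fun _ _ => sq_nonneg _)
    simp only [hb, ite_pow]
    rw [sum_Icc_ite_le _ _ (by omega : ℓ - 1 ≤ k), hβ, Real.sq_sqrt hβ0, nsmul_eq_mul,
      show k - (ℓ - 1) = k - ℓ + 1 by omega, hsℓ]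
    ring
  have ha2 : ∀ i, a i * a i = b i ^ 2 / β ^ 2 := fun i => by
    simp only [ha, hb]; split_ifs <;> ring
  calc ∑ i ∈ T, a i * a i = (∑ i ∈ T, b i ^ 2) / β ^ 2 := by simp only [ha2, sum_div]
    _ ≤ 1 := div_le_one_of_le₀
      (hβsq ▸ hTk ▸ sum_le_sum_Icc_card_of_antitoneOn hb_anti hT) (sq_nonneg β)

/-- Every k×k principal submatrix of W = a aᵀ has trace at most 1, where a is
the normalized vector (v_1,…,v_{ℓ-1},α,…,α)/β.  (Entries are 1-indexed.) -/
theorem stmt4 (n k ℓ : ℕ) (v s : ℕ → ℝ) (α β : ℝ) (a : ℕ → ℝ)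
    (hk2 : 2 ≤ k) (hkn : k ≤ n)
    (hnn : ∀ i ∈ Finset.Icc 1 n, 0 ≤ v i)
    (hmono : ∀ i ∈ Finset.Icc 1 n, ∀ j ∈ Finset.Icc 1 n, i ≤ j → v j ≤ v i)
    (hunit : ∑ i ∈ Finset.Icc 1 n, v i ^ 2 = 1)
    (hs : ∀ j, s j = ∑ i ∈ Finset.Icc j n, v i)
    (hℓ2 : 2 ≤ ℓ) (hℓk : ℓ ≤ k)
    (hℓ : s ℓ / ((k - ℓ + 1 : ℕ) : ℝ) ≤ v (ℓ - 1))
    (hℓmax : ∀ m, ℓ < m → m ≤ k → v (m - 1) < s m / ((k - m + 1 : ℕ) : ℝ))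
    (hα : α = s ℓ / ((k - ℓ + 1 : ℕ) : ℝ))
    (hβ : β = Real.sqrt (α * s ℓ + ∑ j ∈ Finset.Icc 1 (ℓ - 1), v j ^ 2))
    (ha : ∀ i, a i = if i ≤ ℓ - 1 then v i / β else α / β) :
    ∀ T ⊆ Finset.Icc 1 n, T.card = k → ∑ i ∈ T, a i * a i ≤ 1 :=
  stmt4_general n k ℓ v s α β a hnn hmono hs hℓ2 hℓk hℓ hα hβ ha
end

section
/- Let v = (v_1,…,v_n) be a unit vector in ℝⁿ with v_1 ≥ ⋯ ≥ v_n ≥ 0 and 2 ≤ k ≤ n, let s_k = ∑_{i=k}^n v_i, and suppose v_{k-1} ≥ s_k. For j = k,…,n define u_j = ∑_{i=1}^{k-1} √(v_j/s_k) v_i e_i + √(s_k v_j) e_j. Then ∑_{j=k}^n u_j u_jᵀ − v vᵀ equals the block-diagonal matrix O_{k-1} ⊕ S, where S is the (n-k+1)×(n-k+1) matrix S = diag(v_k s_k, …, v_n s_k) − (v_i v_j)_{k ≤ i,j ≤ n}. -/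
/-- In the ℓ = k case, ∑_{j=k}^n u_j u_jᵀ − v vᵀ is the block matrix
O_{k-1} ⊕ S with S = diag(v_i s) − (v_i v_j).  (Entries are 1-indexed.) -/
theorem stmt7 (n k : ℕ) (hk2 : 2 ≤ k) (hkn : k ≤ n)
    (v : ℕ → ℝ) (s : ℝ)
    (hnn : ∀ i ∈ Finset.Icc 1 n, 0 ≤ v i)
    (hmono : ∀ i ∈ Finset.Icc 1 n, ∀ j ∈ Finset.Icc 1 n, i ≤ j → v j ≤ v i)
    (hunit : ∑ i ∈ Finset.Icc 1 n, v i ^ 2 = 1)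
    (hs : s = ∑ i ∈ Finset.Icc k n, v i) (hspos : 0 < s)
    (hcase : s ≤ v (k - 1))
    (u : ℕ → ℕ → ℝ)
    (hu : ∀ j ∈ Finset.Icc k n, ∀ i ∈ Finset.Icc 1 n,
        u j i = if i ≤ k - 1 then Real.sqrt (v j / s) * v i
                else if i = j then Real.sqrt (s * v j) else 0) :
    ∀ i ∈ Finset.Icc 1 n, ∀ j ∈ Finset.Icc 1 n,
      (∑ m ∈ Finset.Icc k n, u m i * u m j) - v i * v j =
        if k ≤ i ∧ k ≤ j then (if i = j then v i * s else 0) - v i * v j else 0 := by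
  intro i hi j hj
  have hi' := Finset.mem_Icc.mp hi
  have hj' := Finset.mem_Icc.mp hj
  have hs0 : s ≠ 0 := ne_of_gt hspos
  have hvm : ∀ m ∈ Finset.Icc k n, 0 ≤ v m := by
    intro m hm
    have hm' := Finset.mem_Icc.mp hm
    exact hnn m (Finset.mem_Icc.mpr ⟨by omega, hm'.2⟩)
  -- √(s v m) √(v m / s) = v m
  have key : ∀ m ∈ Finset.Icc k n, Real.sqrt (s * v m) * Real.sqrt (v m / s) = v m := by
    intro m hm
    rw [← Real.sqrt_mul (mul_nonneg hspos.le (hvm m hm)),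
      show s * v m * (v m / s) = v m ^ 2 by field_simp]
    exact Real.sqrt_sq (hvm m hm)
  by_cases hki : k ≤ i <;> by_cases hkj : k ≤ j
  · -- both ≥ k
    have hnik : ¬ (i ≤ k - 1) := by omega
    have hnjk : ¬ (j ≤ k - 1) := by omega
    rw [if_pos ⟨hki, hkj⟩]
    by_cases hij : i = j
    · subst hij
      rw [if_pos rfl]
      have hsum : ∑ m ∈ Finset.Icc k n, u m i * u m i = v i * s := by
        rw [show v i * s = if i ∈ Finset.Icc k n then v i * s else 0 from
          (if_pos (Finset.mem_Icc.mpr ⟨hki, hi'.2⟩)).symm,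
          ← Finset.sum_ite_eq (Finset.Icc k n) i (fun _ => v i * s)]
        refine Finset.sum_congr rfl fun m hm => ?_
        rw [hu m hm i hi, if_neg hnik]
        by_cases him : i = m
        · subst him
          rw [if_pos rfl, if_pos rfl,
            Real.mul_self_sqrt (mul_nonneg hspos.le (hvm i hm)), mul_comm]
        · simp [him]
      rw [hsum]
    · rw [if_neg hij]
      have hsum : ∑ m ∈ Finset.Icc k n, u m i * u m j = 0 := by
        refine Finset.sum_eq_zero fun m hm => ?_
        rw [hu m hm i hi, hu m hm j hj, if_neg hnik, if_neg hnjk]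
        by_cases him : i = m
        · have : j ≠ m := fun h => hij (him.trans h.symm)
          rw [if_neg this, mul_zero]
        · rw [if_neg him, zero_mul]
      rw [hsum]
  · -- k ≤ i, j ≤ k-1
    have hnik : ¬ (i ≤ k - 1) := by omega
    have hjk : j ≤ k - 1 := by omega
    rw [if_neg (fun h => hkj h.2)]
    have hsum : ∑ m ∈ Finset.Icc k n, u m i * u m j = v i * v j := by
      have hiI : i ∈ Finset.Icc k n := Finset.mem_Icc.mpr ⟨hki, hi'.2⟩
      rw [show v i * v j = if i ∈ Finset.Icc k n then v i * v j else 0 from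
        (if_pos hiI).symm, ← Finset.sum_ite_eq (Finset.Icc k n) i (fun _ => v i * v j)]
      refine Finset.sum_congr rfl fun m hm => ?_
      rw [hu m hm i hi, hu m hm j hj, if_neg hnik, if_pos hjk]
      by_cases him : i = m
      · subst him
        rw [if_pos rfl, ← mul_assoc, key i hm]
        simp
      · simp [him]
    rw [hsum]; ring
  · -- i ≤ k-1, k ≤ j
    have hik : i ≤ k - 1 := by omega
    have hnjk : ¬ (j ≤ k - 1) := by omega
    rw [if_neg (fun h => hki h.1)]
    have hsum : ∑ m ∈ Finset.Icc k n, u m i * u m j = v i * v j := by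
      have hjI : j ∈ Finset.Icc k n := Finset.mem_Icc.mpr ⟨hkj, hj'.2⟩
      rw [show v i * v j = if j ∈ Finset.Icc k n then v i * v j else 0 from
        (if_pos hjI).symm, ← Finset.sum_ite_eq (Finset.Icc k n) j (fun _ => v i * v j)]
      refine Finset.sum_congr rfl fun m hm => ?_
      rw [hu m hm i hi, hu m hm j hj, if_pos hik, if_neg hnjk]
      by_cases hjm : j = m
      · subst hjm
        rw [if_pos rfl]
        rw [show Real.sqrt (v j / s) * v i * Real.sqrt (s * v j)
            = Real.sqrt (s * v j) * Real.sqrt (v j / s) * v i by ring, key j hm]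
        simp [mul_comm]
      · simp [hjm]
    rw [hsum]; ring
  · -- both ≤ k-1
    have hik : i ≤ k - 1 := by omega
    have hjk : j ≤ k - 1 := by omega
    rw [if_neg (fun h => hki h.1)]
    have hsum : ∑ m ∈ Finset.Icc k n, u m i * u m j = v i * v j := by
      have : ∀ m ∈ Finset.Icc k n, u m i * u m j = v m / s * (v i * v j) := by
        intro m hm
        rw [hu m hm i hi, hu m hm j hj, if_pos hik, if_pos hjk,
          show Real.sqrt (v m / s) * v i * (Real.sqrt (v m / s) * v j)
            = Real.sqrt (v m / s) * Real.sqrt (v m / s) * (v i * v j) by ring,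
          Real.mul_self_sqrt (div_nonneg (hvm m hm) hspos.le)]
      rw [Finset.sum_congr rfl this, ← Finset.sum_mul, ← Finset.sum_div, ← hs,
        div_self hs0, one_mul]
    rw [hsum]; ring
end

section
/- Let H be an n×n real symmetric matrix, u ∈ ℝⁿ, and V(n,k) the set of vectors in ℝⁿ with exactly k nonzero entries each equal to 1/k. Then the following are equivalent: (a) there exists a real symmetric H such that uᵀHu + c·wᵀHw > xᵀHx for all c ≥ 0, all w = e_i − e_j, and all x ∈ V(n,k); (b) there exists a real symmetric H such that H_{ii} + H_{jj} ≥ 2H_{ij} for all i < j and uᵀHu > xᵀHx for all x ∈ V(n,k). -/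
/-!
Both conditions hold for the same matrices `H`. For `w = eᵢ - eⱼ` and symmetric `H` one has
`wᵀHw = Hᵢᵢ + Hⱼⱼ - 2Hᵢⱼ`, and `a < b + c t` holds for every `c ≥ 0` exactly when `a < b` and
`t ≥ 0`; nonemptiness of `Fin n` and of `V(n,k)` lets the quantifiers over `(i, j)` and `x` separate.
-/

/-- The set of vectors in ℝⁿ with exactly k nonzero entries, each equal to 1/k. -/
def Vnk (n k : ℕ) : Set (Fin n → ℝ) :=
  {x | ∃ T : Finset (Fin n), T.card = k ∧ ∀ i, x i = if i ∈ T then (1 : ℝ) / k else 0}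

theorem forall_nonneg_lt_add_mul_iff {K : Type*} [Field K] [LinearOrder K] [IsStrictOrderedRing K]
    {a b t : K} : (∀ c : K, 0 ≤ c → a < b + c * t) ↔ a < b ∧ 0 ≤ t := by
  constructor
  · intro h
    have hab : a < b := by simpa using h 0 le_rfl
    refine ⟨hab, le_of_not_gt fun ht => ?_⟩
    have := h ((b - a) / -t) (div_nonneg (sub_nonneg.2 hab.le) (neg_nonneg.2 ht.le))
    rw [div_mul_eq_mul_div, div_neg, mul_div_cancel_right₀ _ ht.ne] at this
    linarith
  · rintro ⟨hab, ht⟩ c hc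
    linarith [mul_nonneg hc ht]

namespace Matrix

variable {ι R : Type*} [Fintype ι] [DecidableEq ι] [CommRing R]

theorem single_sub_single_dotProduct_mulVec (H : Matrix ι ι R) (i j : ι) :
    (Pi.single i 1 - Pi.single j 1) ⬝ᵥ H *ᵥ (Pi.single i 1 - Pi.single j 1) =
      H i i + H j j - H i j - H j i := by
  simp only [mulVec_sub, dotProduct_sub, sub_dotProduct, mulVec_single_one,
    single_one_dotProduct, col_apply]
  ring

theorem IsSymm.single_sub_single_dotProduct_mulVec {H : Matrix ι ι R} (hH : H.IsSymm)
    (i j : ι) :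
    (Pi.single i 1 - Pi.single j 1) ⬝ᵥ H *ᵥ (Pi.single i 1 - Pi.single j 1) =
      H i i + H j j - 2 * H i j := by
  rw [Matrix.single_sub_single_dotProduct_mulVec, hH.apply j i]
  ring

theorem IsSymm.forall_single_sub_single_dotProduct_mulVec_nonneg_iff [LinearOrder ι]
    [LinearOrder R] [IsStrictOrderedRing R] {H : Matrix ι ι R} (hH : H.IsSymm) :
    (∀ i j, 0 ≤ (Pi.single i 1 - Pi.single j 1) ⬝ᵥ H *ᵥ (Pi.single i 1 - Pi.single j 1)) ↔
      ∀ i j, i < j → 2 * H i j ≤ H i i + H j j := by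
  simp only [hH.single_sub_single_dotProduct_mulVec, sub_nonneg]
  refine ⟨fun h i j _ => h i j, fun h i j => ?_⟩
  rcases lt_trichotomy i j with hij | rfl | hij
  · exact h i j hij
  · linarith
  · rw [← hH.apply i j, add_comm]
    exact h j i hij

end Matrix

theorem Vnk_nonempty {n k : ℕ} (hkn : k ≤ n) : (Vnk n k).Nonempty := by
  obtain ⟨T, -, hT⟩ := Finset.exists_subset_card_eq
    (show k ≤ (Finset.univ : Finset (Fin n)).card by simpa using hkn)
  exact ⟨_, T, hT, fun _ => rfl⟩

theorem stmt10_general (n k : ℕ) (hk : 1 ≤ k) (hkn : k ≤ n)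
    (u : Fin n → ℝ) :
    (∃ H : Matrix (Fin n) (Fin n) ℝ, H.IsSymm ∧
      ∀ c : ℝ, 0 ≤ c → ∀ i j : Fin n, ∀ x ∈ Vnk n k,
        dotProduct x (H.mulVec x) <
          dotProduct u (H.mulVec u) +
            c * dotProduct (Pi.single i 1 - Pi.single j 1)
              (H.mulVec (Pi.single i 1 - Pi.single j 1))) ↔
    (∃ H : Matrix (Fin n) (Fin n) ℝ, H.IsSymm ∧
      (∀ i j : Fin n, i < j → 2 * H i j ≤ H i i + H j j) ∧
      ∀ x ∈ Vnk n k,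
        dotProduct x (H.mulVec x) < dotProduct u (H.mulVec u)) := by
  have i₀ : Fin n := ⟨0, by omega⟩
  obtain ⟨x₀, hx₀⟩ := Vnk_nonempty hkn
  refine exists_congr fun H => and_congr_right fun hH => ?_
  rw [← hH.forall_single_sub_single_dotProduct_mulVec_nonneg_iff]
  constructor
  · intro h
    exact ⟨fun i j => (forall_nonneg_lt_add_mul_iff.1 fun c hc => h c hc i j x₀ hx₀).2,
      fun x hx => (forall_nonneg_lt_add_mul_iff.1 fun c hc => h c hc i₀ i₀ x hx).1⟩
  · rintro ⟨hw, hlt⟩ c hc i j x hx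
    exact forall_nonneg_lt_add_mul_iff.2 ⟨hlt x hx, hw i j⟩ c hc

/-- Lemma 3 of Johnston–Li–Plosker–Poon–Regula: equivalence of the two forms of
the separating-hyperplane condition. -/
theorem stmt10 (n k : ℕ) (hk : 1 ≤ k) (hkn : k ≤ n)
    (u : Fin n → ℝ) (hu1 : ∀ i, u i ∈ Set.Icc (0 : ℝ) (1 / k)) (hu2 : ∑ i, u i = 1) :
    (∃ H : Matrix (Fin n) (Fin n) ℝ, H.IsSymm ∧
      ∀ c : ℝ, 0 ≤ c → ∀ i j : Fin n, ∀ x ∈ Vnk n k,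
        dotProduct x (H.mulVec x) <
          dotProduct u (H.mulVec u) +
            c * dotProduct (Pi.single i 1 - Pi.single j 1)
              (H.mulVec (Pi.single i 1 - Pi.single j 1))) ↔
    (∃ H : Matrix (Fin n) (Fin n) ℝ, H.IsSymm ∧
      (∀ i j : Fin n, i < j → 2 * H i j ≤ H i i + H j j) ∧
      ∀ x ∈ Vnk n k,
        dotProduct x (H.mulVec x) < dotProduct u (H.mulVec u)) :=
  stmt10_general n k hk hkn u
end

section
/- Let W be an n×n Hermitian matrix. Then tr(Wρ) ≥ 0 for every density matrix ρ in I_k (the convex hull of pure states with at most k non-zero entries) if and only if every k×k principal submatrix of W is positive semidefinite. -/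
/-! Both conditions are equivalent to `0 ≤ v* W v` for every `v` with at most `k` non-zero
entries. For the trace condition: `tr (W v v*) = v* W v`, the sign of `v* W v` does not change
when `v` is rescaled to a unit vector, and nonnegativity passes to convex combinations. For the
submatrix condition: a vector supported on `{i₁ < ⋯ < iₖ}` only sees `W[i₁, …, iₖ]`, and every
support of size at most `k` fits in such a set since `k ≤ n`. -/

open scoped Classical

/-- The set of k-incoherent density matrices. -/
def kIncoherent (n k : ℕ) : Set (Matrix (Fin n) (Fin n) ℂ) :=
  convexHull ℝ {M | ∃ v : Fin n → ℂ,
    (∑ i, ‖v i‖ ^ 2 = 1) ∧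
    (Finset.univ.filter fun i => v i ≠ 0).card ≤ k ∧
    M = Matrix.of fun i j => v i * star (v j)}

open Matrix Finset Function

section Support

variable {m n R : Type*} [Fintype m] [Fintype n]

theorem Matrix.trace_mul_vecMulVec_star [CommSemiring R] [StarRing R]
    (W : Matrix n n R) (v : n → R) :
    (W * vecMulVec v (star v)).trace = star v ⬝ᵥ W *ᵥ v := by
  rw [mul_vecMulVec, trace_vecMulVec, dotProduct_comm]

theorem Matrix.dotProduct_mulVec_eq_submatrix [NonUnitalNonAssocSemiring R]
    (W : Matrix n n R) {f : m → n} (hf : Injective f) {u v : n → R}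
    (hu : ∀ i ∉ Set.range f, u i = 0) (hv : ∀ i ∉ Set.range f, v i = 0) :
    u ⬝ᵥ W *ᵥ v = (u ∘ f) ⬝ᵥ W.submatrix f f *ᵥ (v ∘ f) := by
  simp only [dotProduct, mulVec, submatrix_apply]
  refine (Fintype.sum_of_injective f hf _ _ (fun i hi => by simp [hu i hi]) fun a => ?_).symm
  congr 1
  exact Fintype.sum_of_injective f hf _ _ (fun j hj => by simp [hv j hj]) fun _ => rfl

theorem card_filter_extend_ne_zero_le [Zero R] (f : m → n) (x : m → R) :
    (univ.filter fun i => extend f x 0 i ≠ 0).card ≤ Fintype.card m := by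
  calc (univ.filter fun i => extend f x 0 i ≠ 0).card
      ≤ (univ.image f).card := card_le_card fun i hi => by
        by_contra hni
        refine (mem_filter.1 hi).2 (extend_apply' _ _ _ fun ⟨a, ha⟩ => hni ?_)
        exact mem_image.2 ⟨a, mem_univ a, ha⟩
    _ ≤ Fintype.card m := card_image_le

end Support

open ComplexOrder

theorem Matrix.dotProduct_mulVec_real_smul {n : Type*} [Fintype n]
    (W : Matrix n n ℂ) (c : ℝ) (v : n → ℂ) :
    star (c • v) ⬝ᵥ W *ᵥ (c • v) = (c ^ 2) • (star v ⬝ᵥ W *ᵥ v) := by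
  rw [star_smul, star_trivial, mulVec_smul, dotProduct_smul, smul_dotProduct, smul_smul, sq]

theorem exists_pos_sum_norm_smul_sq_eq_one {n : Type*} [Fintype n] {v : n → ℂ} (hv : v ≠ 0) :
    ∃ c : ℝ, 0 < c ∧ ∑ i, ‖(c • v) i‖ ^ 2 = 1 := by
  have hs : 0 < ∑ i, ‖v i‖ ^ 2 := by
    obtain ⟨i, hi⟩ := Function.ne_iff.1 hv
    exact sum_pos' (fun _ _ => by positivity) ⟨i, mem_univ i, pow_pos (norm_pos_iff.2 hi) 2⟩
  refine ⟨(√(∑ i, ‖v i‖ ^ 2))⁻¹, by positivity, ?_⟩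
  simp only [Pi.smul_apply, norm_smul, mul_pow, ← mul_sum, Real.norm_eq_abs, sq_abs, inv_pow,
    Real.sq_sqrt hs.le]
  exact inv_mul_cancel₀ hs.ne'

theorem convex_setOf_trace_mul_nonneg {n : Type*} [Fintype n] (W : Matrix n n ℂ) :
    Convex ℝ {ρ : Matrix n n ℂ | 0 ≤ (W * ρ).trace} :=
  (convex_Ici 0).linear_preimage (traceLinearMap n ℝ ℂ ∘ₗ LinearMap.mulLeft ℝ W)

theorem forall_kIncoherent_trace_mul_nonneg_iff (n k : ℕ) (W : Matrix (Fin n) (Fin n) ℂ) :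
    (∀ ρ ∈ kIncoherent n k, 0 ≤ (W * ρ).trace) ↔
      ∀ v : Fin n → ℂ, (univ.filter fun i => v i ≠ 0).card ≤ k → 0 ≤ star v ⬝ᵥ W *ᵥ v := by
  constructor
  · intro h v hvk
    rcases eq_or_ne v 0 with rfl | hv
    · simp
    obtain ⟨c, hc, hcv⟩ := exists_pos_sum_norm_smul_sq_eq_one hv
    have hsupp : (univ.filter fun i => (c • v) i ≠ 0) = univ.filter fun i => v i ≠ 0 := by
      simp [hc.ne']
    have hpure : 0 ≤ (W * vecMulVec (c • v) (star (c • v))).trace :=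
      h _ (subset_convexHull ℝ _ ⟨c • v, hcv, hsupp ▸ hvk, rfl⟩)
    rw [trace_mul_vecMulVec_star, dotProduct_mulVec_real_smul] at hpure
    simpa [smul_smul, hc.ne'] using smul_nonneg (inv_nonneg.2 (sq_nonneg c)) hpure
  · intro h
    refine fun ρ hρ => convexHull_min ?_ (convex_setOf_trace_mul_nonneg W) hρ
    rintro _ ⟨v, -, hvk, rfl⟩
    show 0 ≤ (W * vecMulVec v (star v)).trace
    exact (trace_mul_vecMulVec_star W v).symm ▸ h v hvk

theorem forall_dotProduct_mulVec_nonneg_iff_posSemidef_submatrix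
    {n R : Type*} [Fintype n] [LinearOrder n] [CommRing R] [PartialOrder R] [StarRing R]
    {k : ℕ} (hkn : k ≤ Fintype.card n) {W : Matrix n n R} (hW : W.IsHermitian) :
    (∀ v : n → R, (univ.filter fun i => v i ≠ 0).card ≤ k → 0 ≤ star v ⬝ᵥ W *ᵥ v) ↔
      ∀ f : Fin k → n, StrictMono f → (W.submatrix f f).PosSemidef := by
  constructor
  · intro h f hf
    refine posSemidef_iff_dotProduct_mulVec.2 ⟨hW.submatrix f, fun x => ?_⟩
    have hoff : ∀ i ∉ Set.range f, extend f x 0 i = 0 := fun i hi =>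
      extend_apply' _ _ _ hi
    have hx : extend f x 0 ∘ f = x := extend_comp hf.injective x 0
    have := h (extend f x 0) (by simpa using card_filter_extend_ne_zero_le f x)
    rwa [dotProduct_mulVec_eq_submatrix W hf.injective (fun i hi => by simp [hoff i hi]) hoff,
      show star (extend f x 0) ∘ f = star x from congrArg star hx, hx] at this
  · intro h v hvk
    obtain ⟨T, hsupp, hT⟩ := exists_superset_card_eq hvk hkn
    set f := T.orderEmbOfFin hT
    have hoff : ∀ i ∉ Set.range f, v i = 0 := fun i hi => by
      by_contra hvi
      exact hi (range_orderEmbOfFin T hT ▸ hsupp (mem_filter.2 ⟨mem_univ i, hvi⟩))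
    rw [dotProduct_mulVec_eq_submatrix W f.injective (fun i hi => by simp [hoff i hi]) hoff]
    exact (h f f.strictMono).dotProduct_mulVec_nonneg (v ∘ f)

open ComplexOrder in
theorem stmt15_general (n k : ℕ) (hkn : k ≤ n)
    (W : Matrix (Fin n) (Fin n) ℂ) (hW : W.IsHermitian) :
    (∀ ρ ∈ kIncoherent n k, 0 ≤ (W * ρ).trace) ↔
    (∀ f : Fin k → Fin n, StrictMono f → (W.submatrix f f).PosSemidef) :=
  (forall_kIncoherent_trace_mul_nonneg_iff n k W).trans
    (forall_dotProduct_mulVec_nonneg_iff_posSemidef_submatrix (by simpa using hkn) hW)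

open ComplexOrder in
/-- A Hermitian W satisfies tr(Wρ) ≥ 0 for all ρ ∈ I_k iff every k×k principal
submatrix of W is positive semidefinite. -/
theorem stmt15 (n k : ℕ) (hk : 1 ≤ k) (hkn : k ≤ n)
    (W : Matrix (Fin n) (Fin n) ℂ) (hW : W.IsHermitian) :
    (∀ ρ ∈ kIncoherent n k, 0 ≤ (W * ρ).trace) ↔
    (∀ f : Fin k → Fin n, StrictMono f → (W.submatrix f f).PosSemidef) :=
  stmt15_general n k hkn W hW
end
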